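/- arXiv:2005.07372 — 12 statements merged into one kernel-verified Lean document; each statement's English description precedes it below -/
import Mathlib

section
/- For every real number ρ with 0 ≤ ρ < 1, the inequality (1 - 3ρ + 2ρ^{n+1})·n + 3ρ^{n+1} ≥ 3ρ holds for all integers n ≥ 1 if and only if ρ ≤ 1/5. -/
/- At `n = 1` the inequality reads `(1 - ρ)(1 - 5ρ) ≥ 0`, which for `ρ < 1` is exactly `ρ ≤ 1/5`.
For `n ≥ 2` and `ρ ≤ 2/9` the coefficient `1 - 3ρ` is positive, so the left side is at least
`2(1 - 3ρ) ≥ 3ρ`, the terms in `ρ^(n+1)` being nonnegative. -/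

theorem sub_three_mul_eq_at_one (ρ : ℝ) :
    (1 - 3*ρ + 2*ρ^(1+1)) * ((1 : ℕ) : ℝ) + 3*ρ^(1+1) - 3*ρ = (1 - ρ) * (1 - 5*ρ) := by
  push_cast
  ring

theorem ineq_at_one_iff {ρ : ℝ} (h1 : ρ < 1) :
    (1 - 3*ρ + 2*ρ^(1+1)) * ((1 : ℕ) : ℝ) + 3*ρ^(1+1) ≥ 3*ρ ↔ ρ ≤ 1/5 := by
  rw [ge_iff_le, ← sub_nonneg, sub_three_mul_eq_at_one, mul_nonneg_iff_of_pos_left (by linarith)]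
  constructor <;> intro h <;> linarith

theorem ineq_of_two_le {ρ : ℝ} (h0 : 0 ≤ ρ) (hρ : ρ ≤ 2/9) {n : ℕ} (hn : 2 ≤ n) :
    (1 - 3*ρ + 2*ρ^(n+1)) * n + 3*ρ^(n+1) ≥ 3*ρ := by
  have hpow : 0 ≤ ρ^(n+1) := pow_nonneg h0 _
  have hn' : (2 : ℝ) ≤ n := by exact_mod_cast hn
  have hcoef : 0 ≤ 1 - 3*ρ := by linarith
  calc 3*ρ ≤ (1 - 3*ρ) * 2 := by linarith
    _ ≤ (1 - 3*ρ) * n := mul_le_mul_of_nonneg_left hn' hcoef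
    _ ≤ (1 - 3*ρ + 2*ρ^(n+1)) * n + 3*ρ^(n+1) := by nlinarith

theorem stmt_0 (ρ : ℝ) (h0 : 0 ≤ ρ) (h1 : ρ < 1) :
    (∀ n : ℕ, 1 ≤ n → (1 - 3*ρ + 2*ρ^(n+1)) * n + 3*ρ^(n+1) ≥ 3*ρ) ↔ ρ ≤ 1/5 := by
  constructor
  · intro h
    exact (ineq_at_one_iff h1).1 (h 1 le_rfl)
  · intro hρ n hn
    rcases hn.eq_or_lt with rfl | hn2
    · exact (ineq_at_one_iff h1).2 hρ
    · exact ineq_of_two_le h0 (by linarith) hn2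
end

section
/- Let a ∈ [-1, 1). The linear system M₂ x = v, where M₂ is the 3×3 matrix with entries M₂(i,j) = ∫_{-1}^{1} t^{i+j} dt for 0 ≤ i,j ≤ 2 and v has entries v_j = (1 - a^{j+1})/(j+1) for j = 0,1,2, has unique solution x₀ = (1/8)(1-a)(4-5a-5a²), x₁ = (3/4)(1-a²), x₂ = (15/8)a(1-a²); moreover all three components are strictly positive if and only if 0 < a < (√105 - 5)/10. -/
/-!
The Gram matrix of `1, t, t²` on `[-1, 1]` has determinant `32/135`, so the system has at most
one solution, and the stated vector is checked to be one by expanding the three rows. For the sign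
conditions: `x₁ > 0` forces `|a| < 1`, then `x₂ > 0` forces `a > 0`, and with `a > 0` the factor
`4 - 5a - 5a²` of `x₀` is positive exactly below its positive root `(√105 - 5)/10`.
-/

open intervalIntegral

noncomputable section

namespace LegendreProjection

def monomialGram : Matrix (Fin 3) (Fin 3) ℝ :=
  Matrix.of fun i j => ∫ t in (-1 : ℝ)..1, t ^ ((i : ℕ) + (j : ℕ))

def indicatorMoments (a : ℝ) : Fin 3 → ℝ :=
  fun j => (1 - a ^ ((j : ℕ) + 1)) / ((j : ℕ) + 1)

def projCoeffs (a : ℝ) : Fin 3 → ℝ :=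
  ![(1/8) * (1-a) * (4 - 5*a - 5*a^2), (3/4) * (1 - a^2), (15/8) * a * (1 - a^2)]

theorem monomialGram_eq : monomialGram = !![2, 0, 2/3; 0, 2/3, 0; 2/3, 0, 2/5] := by
  ext i j
  fin_cases i <;> fin_cases j <;> norm_num [monomialGram, integral_pow]

theorem det_monomialGram : monomialGram.det = 32 / 135 := by
  simp only [monomialGram_eq, Matrix.det_fin_three, Matrix.of_apply, Matrix.cons_val',
    Matrix.cons_val_zero, Matrix.cons_val_fin_one, Matrix.cons_val_one, Matrix.cons_val]
  norm_num

theorem monomialGram_mulVec_injective : Function.Injective monomialGram.mulVec :=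
  Matrix.mulVec_injective_of_det_ne_zero (by rw [det_monomialGram]; norm_num)

theorem monomialGram_mulVec_projCoeffs (a : ℝ) :
    monomialGram.mulVec (projCoeffs a) = indicatorMoments a := by
  rw [monomialGram_eq]
  ext j
  fin_cases j <;>
    simp [Matrix.mulVec, dotProduct, Fin.sum_univ_three, projCoeffs, indicatorMoments] <;> ring

theorem four_sub_five_mul_sub_five_mul_sq (a : ℝ) :
    4 - 5 * a - 5 * a ^ 2 = 5 * ((√105 - 5) / 10 - a) * (a + (√105 + 5) / 10) := by
  have hsq : √105 ^ 2 = 105 := Real.sq_sqrt (by norm_num)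
  linear_combination -hsq / 20

theorem four_sub_five_mul_sub_five_mul_sq_pos_iff {a : ℝ} (ha : 0 < a) :
    0 < 4 - 5 * a - 5 * a ^ 2 ↔ a < (√105 - 5) / 10 := by
  have hfactor : 0 < 5 * (a + (√105 + 5) / 10) := by positivity
  rw [four_sub_five_mul_sub_five_mul_sq, mul_right_comm, mul_pos_iff_of_pos_left hfactor, sub_pos]

theorem sqrt_105_sub_five_div_ten_lt_one : (√105 - 5) / 10 < 1 := by
  have : √105 < 15 := by
    rw [Real.sqrt_lt' (by norm_num)]
    norm_num
  linarith

theorem projCoeffs_pos_iff (a : ℝ) :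
    (∀ i, 0 < projCoeffs a i) ↔ 0 < a ∧ a < (√105 - 5) / 10 := by
  simp only [Fin.forall_fin_succ, IsEmpty.forall_iff, and_true, projCoeffs,
    Matrix.cons_val_zero, Matrix.cons_val_succ]
  constructor
  · rintro ⟨h₀, h₁, h₂⟩
    have hsq : 0 < 1 - a ^ 2 := by linarith
    have ha : 0 < a := by nlinarith
    have hlt : a < 1 := by nlinarith
    refine ⟨ha, (four_sub_five_mul_sub_five_mul_sq_pos_iff ha).mp ?_⟩
    exact pos_of_mul_pos_right h₀ (by linarith)
  · rintro ⟨ha, hr⟩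
    have hlt : a < 1 := hr.trans sqrt_105_sub_five_div_ten_lt_one
    have hsq : 0 < 1 - a ^ 2 := by nlinarith
    have hquad := (four_sub_five_mul_sub_five_mul_sq_pos_iff ha).mpr hr
    exact ⟨by nlinarith [mul_pos (sub_pos.mpr hlt) hquad], by linarith, by positivity⟩

end LegendreProjection

end

open LegendreProjection in
theorem stmt_1_general (a : ℝ)
    (M : Matrix (Fin 3) (Fin 3) ℝ)
    (hM : ∀ i j : Fin 3, M i j = ∫ t in (-1:ℝ)..1, t ^ ((i:ℕ) + (j:ℕ)))
    (v : Fin 3 → ℝ)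
    (hv : ∀ j : Fin 3, v j = (1 - a ^ ((j:ℕ) + 1)) / ((j:ℕ) + 1)) :
    M.mulVec ![(1/8) * (1-a) * (4 - 5*a - 5*a^2), (3/4) * (1 - a^2), (15/8) * a * (1 - a^2)] = v ∧
    (∀ x : Fin 3 → ℝ, M.mulVec x = v →
      x = ![(1/8) * (1-a) * (4 - 5*a - 5*a^2), (3/4) * (1 - a^2), (15/8) * a * (1 - a^2)]) ∧
    ((∀ i : Fin 3,
        0 < ![(1/8) * (1-a) * (4 - 5*a - 5*a^2), (3/4) * (1 - a^2), (15/8) * a * (1 - a^2)] i) ↔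
      (0 < a ∧ a < (Real.sqrt 105 - 5) / 10)) := by
  obtain rfl : M = monomialGram := Matrix.ext hM
  obtain rfl : v = indicatorMoments a := funext hv
  have hsolution := monomialGram_mulVec_projCoeffs a
  exact ⟨hsolution, fun x hx => monomialGram_mulVec_injective (hx.trans hsolution.symm),
    projCoeffs_pos_iff a⟩

theorem stmt_1 (a : ℝ) (ha1 : -1 ≤ a) (ha2 : a < 1)
    (M : Matrix (Fin 3) (Fin 3) ℝ)
    (hM : ∀ i j : Fin 3, M i j = ∫ t in (-1:ℝ)..1, t ^ ((i:ℕ) + (j:ℕ)))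
    (v : Fin 3 → ℝ)
    (hv : ∀ j : Fin 3, v j = (1 - a ^ ((j:ℕ) + 1)) / ((j:ℕ) + 1)) :
    M.mulVec ![(1/8) * (1-a) * (4 - 5*a - 5*a^2), (3/4) * (1 - a^2), (15/8) * a * (1 - a^2)] = v ∧
    (∀ x : Fin 3 → ℝ, M.mulVec x = v →
      x = ![(1/8) * (1-a) * (4 - 5*a - 5*a^2), (3/4) * (1 - a^2), (15/8) * a * (1 - a^2)]) ∧
    ((∀ i : Fin 3,
        0 < ![(1/8) * (1-a) * (4 - 5*a - 5*a^2), (3/4) * (1 - a^2), (15/8) * a * (1 - a^2)] i) ↔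
      (0 < a ∧ a < (Real.sqrt 105 - 5) / 10)) :=
  stmt_1_general a M hM v hv
end

section
/- Let a ∈ [-1, 1). The unique solution z = (z₀,z₁,z₂,z₃) of the linear system M₃ z = w, where M₃ is the 4×4 Gram matrix with entries ∫_{-1}^{1} t^{i+j} dt (0 ≤ i,j ≤ 3) and w_j = (1-a^{j+1})/(j+1), is z₀ = (1/8)(1-a)(4-5a-5a²), z₁ = (15/32)(1-a²)(3-7a²), z₂ = (15/8)a(1-a²), z₃ = (35/32)(1-a²)(5a²-1); all four components are strictly positive if and only if 1/√5 < a < (√105 - 5)/10. -/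
/-!
Integrating the monomials makes the Gram matrix explicit; its determinant is nonzero, so the
vector, checked by substitution, is the only solution. For positivity, `z₂` and `z₃` share the
factor `1 - a²`, which forces `0 < a < 1` and `5a² > 1`; then `z₀ > 0` reads `5a² + 5a < 4`,
and the two quadratic conditions together give `7a² < 3`, i.e. `z₁ > 0`. Solving the
quadratics yields the bounds `1/√5` and `(√105 - 5)/10`.
-/

open intervalIntegral Matrix

noncomputable def cubicGram : Matrix (Fin 4) (Fin 4) ℝ :=
  !![2, 0, 2/3, 0; 0, 2/3, 0, 2/5; 2/3, 0, 2/5, 0; 0, 2/5, 0, 2/7]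

theorem cubicGram_apply (i j : Fin 4) :
    cubicGram i j = ∫ t in (-1:ℝ)..1, t ^ ((i : ℕ) + (j : ℕ)) := by
  rw [integral_pow]
  fin_cases i <;> fin_cases j <;> norm_num [cubicGram]

theorem det_cubicGram_ne_zero : cubicGram.det ≠ 0 := by
  rw [cubicGram, det_succ_row_zero]
  simp [Fin.sum_univ_succ, det_fin_three, Fin.succAbove]
  norm_num

noncomputable def indicatorMoments (a : ℝ) (j : Fin 4) : ℝ :=
  (1 - a ^ ((j : ℕ) + 1)) / ((j : ℕ) + 1)

noncomputable def indicatorCoeffs (a : ℝ) : Fin 4 → ℝ :=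
  ![(1/8) * (1-a) * (4 - 5*a - 5*a^2), (15/32) * (1 - a^2) * (3 - 7*a^2),
    (15/8) * a * (1 - a^2), (35/32) * (1 - a^2) * (5*a^2 - 1)]

theorem cubicGram_mulVec_indicatorCoeffs (a : ℝ) :
    cubicGram *ᵥ indicatorCoeffs a = indicatorMoments a := by
  ext j
  fin_cases j <;>
    simp [cubicGram, indicatorCoeffs, indicatorMoments, mulVec, dotProduct,
      Fin.sum_univ_four] <;> ring

theorem one_div_sqrt_five_lt_iff {a : ℝ} : 1 / √5 < a ↔ 0 < a ∧ 1 < 5 * a ^ 2 := by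
  rw [one_div, ← Real.sqrt_inv]
  constructor
  · intro h
    have ha : 0 < a := (Real.sqrt_nonneg _).trans_lt h
    exact ⟨ha, by nlinarith [(Real.sqrt_lt' ha).1 h]⟩
  · rintro ⟨ha, h⟩
    exact (Real.sqrt_lt' ha).2 (by linarith)

theorem lt_sqrt_105_sub_five_div_ten_iff {a : ℝ} (ha : 0 ≤ a) :
    a < (√105 - 5) / 10 ↔ 5 * a ^ 2 + 5 * a < 4 := by
  rw [lt_div_iff₀ (by norm_num : (0:ℝ) < 10), lt_sub_iff_add_lt,
    Real.lt_sqrt (by positivity)]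
  constructor <;> intro h <;> nlinarith

theorem forall_indicatorCoeffs_pos_iff {a : ℝ} :
    (∀ i, 0 < indicatorCoeffs a i) ↔ 0 < a ∧ 1 < 5 * a ^ 2 ∧ 5 * a ^ 2 + 5 * a < 4 := by
  simp only [indicatorCoeffs, Fin.forall_fin_succ, cons_val_zero, cons_val_succ,
    cons_val_fin_one, forall_const]
  constructor
  · rintro ⟨h0, -, h2, h3⟩
    have hs : 0 < 1 - a ^ 2 := by
      by_contra! hs
      have : 5 * a ^ 2 - 1 < 0 := by nlinarith
      nlinarith
    have ha : 0 < a := by nlinarith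
    have h5 : 1 < 5 * a ^ 2 := by nlinarith
    exact ⟨ha, h5, by nlinarith⟩
  · rintro ⟨ha, h5, h4⟩
    have ha1 : a < 1 := by nlinarith
    have hs : 0 < 1 - a ^ 2 := by nlinarith
    refine ⟨by nlinarith, by nlinarith, by positivity, by nlinarith⟩

theorem stmt_2_general (a : ℝ)
    (M : Matrix (Fin 4) (Fin 4) ℝ)
    (hM : ∀ i j : Fin 4, M i j = ∫ t in (-1:ℝ)..1, t ^ ((i:ℕ) + (j:ℕ)))
    (w : Fin 4 → ℝ)
    (hw : ∀ j : Fin 4, w j = (1 - a ^ ((j:ℕ) + 1)) / ((j:ℕ) + 1)) :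
    M.mulVec ![(1/8) * (1-a) * (4 - 5*a - 5*a^2), (15/32) * (1 - a^2) * (3 - 7*a^2),
        (15/8) * a * (1 - a^2), (35/32) * (1 - a^2) * (5*a^2 - 1)] = w ∧
    (∀ z : Fin 4 → ℝ, M.mulVec z = w →
      z = ![(1/8) * (1-a) * (4 - 5*a - 5*a^2), (15/32) * (1 - a^2) * (3 - 7*a^2),
        (15/8) * a * (1 - a^2), (35/32) * (1 - a^2) * (5*a^2 - 1)]) ∧
    ((∀ i : Fin 4,
        0 < ![(1/8) * (1-a) * (4 - 5*a - 5*a^2), (15/32) * (1 - a^2) * (3 - 7*a^2),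
          (15/8) * a * (1 - a^2), (35/32) * (1 - a^2) * (5*a^2 - 1)] i) ↔
      (1 / Real.sqrt 5 < a ∧ a < (Real.sqrt 105 - 5) / 10)) := by
  obtain rfl : M = cubicGram := ext fun i j => (hM i j).trans (cubicGram_apply i j).symm
  obtain rfl : w = indicatorMoments a := funext hw
  have hsolve := cubicGram_mulVec_indicatorCoeffs a
  refine ⟨hsolve, fun z hz => mulVec_injective_of_det_ne_zero det_cubicGram_ne_zero
    (hz.trans hsolve.symm), forall_indicatorCoeffs_pos_iff.trans ?_⟩
  rw [one_div_sqrt_five_lt_iff, and_assoc]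
  exact and_congr_right fun ha => and_congr_right fun _ =>
    (lt_sqrt_105_sub_five_div_ten_iff ha.le).symm

theorem stmt_2 (a : ℝ) (ha1 : -1 ≤ a) (ha2 : a < 1)
    (M : Matrix (Fin 4) (Fin 4) ℝ)
    (hM : ∀ i j : Fin 4, M i j = ∫ t in (-1:ℝ)..1, t ^ ((i:ℕ) + (j:ℕ)))
    (w : Fin 4 → ℝ)
    (hw : ∀ j : Fin 4, w j = (1 - a ^ ((j:ℕ) + 1)) / ((j:ℕ) + 1)) :
    M.mulVec ![(1/8) * (1-a) * (4 - 5*a - 5*a^2), (15/32) * (1 - a^2) * (3 - 7*a^2),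
        (15/8) * a * (1 - a^2), (35/32) * (1 - a^2) * (5*a^2 - 1)] = w ∧
    (∀ z : Fin 4 → ℝ, M.mulVec z = w →
      z = ![(1/8) * (1-a) * (4 - 5*a - 5*a^2), (15/32) * (1 - a^2) * (3 - 7*a^2),
        (15/8) * a * (1 - a^2), (35/32) * (1 - a^2) * (5*a^2 - 1)]) ∧
    ((∀ i : Fin 4,
        0 < ![(1/8) * (1-a) * (4 - 5*a - 5*a^2), (15/32) * (1 - a^2) * (3 - 7*a^2),
          (15/8) * a * (1 - a^2), (35/32) * (1 - a^2) * (5*a^2 - 1)] i) ↔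
      (1 / Real.sqrt 5 < a ∧ a < (Real.sqrt 105 - 5) / 10)) :=
  stmt_2_general a M hM w hw
end

section
/- Suppose 1/√5 < a < (√105 - 5)/10. Then for every integer n ≥ 2 the inequality (3a - 5a³ + 2a^{2n+1})·n + 3a^{2n+1} - 3a ≥ 0 holds. -/
/-!
The expression factors as `a * ((3 - 5a²) n - 3 + (2n + 3) a^(2n))`. The upper bound on `a`
gives `a² < 3/10` (because `√105 > 10`), so `(3 - 5a²) n ≥ 3` once `n ≥ 2`, and the remaining
term is a nonnegative power; the lower bound makes `a` positive.
-/

lemma sq_lt_three_tenths_of_lt_sqrt105 {a : ℝ} (ha : 0 ≤ a) (h : a < (√105 - 5) / 10) :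
    a ^ 2 < 3 / 10 := by
  have hsq : √105 ^ 2 = 105 := Real.sq_sqrt (by norm_num)
  have hgt : 10 < √105 := by rw [Real.lt_sqrt] <;> norm_num
  calc a ^ 2 < ((√105 - 5) / 10) ^ 2 := by gcongr
    _ = (130 - 10 * √105) / 100 := by rw [div_pow, sub_sq, hsq]; ring
    _ < 3 / 10 := by linarith

lemma expr_eq_mul (a : ℝ) (n : ℕ) :
    (3 * a - 5 * a ^ 3 + 2 * a ^ (2 * n + 1)) * n + 3 * a ^ (2 * n + 1) - 3 * a
      = a * ((3 - 5 * a ^ 2) * n - 3 + (2 * n + 3) * a ^ (2 * n)) := by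
  ring

lemma expr_nonneg {a : ℝ} (ha : 0 ≤ a) (ha2 : a ^ 2 ≤ 3 / 10) {n : ℕ} (hn : 2 ≤ n) :
    0 ≤ (3 * a - 5 * a ^ 3 + 2 * a ^ (2 * n + 1)) * n + 3 * a ^ (2 * n + 1) - 3 * a := by
  have hn' : (2 : ℝ) ≤ n := by exact_mod_cast hn
  have hlin : 0 ≤ (3 - 5 * a ^ 2) * n - 3 := by nlinarith
  rw [expr_eq_mul]
  positivity

theorem stmt_3 (a : ℝ) (ha1 : 1 / Real.sqrt 5 < a) (ha2 : a < (Real.sqrt 105 - 5) / 10) :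
    ∀ n : ℕ, 2 ≤ n → (3*a - 5*a^3 + 2*a^(2*n+1)) * n + 3*a^(2*n+1) - 3*a ≥ 0 := by
  intro n hn
  have ha0 : 0 < a := lt_trans (by positivity) ha1
  exact expr_nonneg ha0.le (sq_lt_three_tenths_of_lt_sqrt105 ha0.le ha2).le hn
end

section
/- Suppose 1/√5 < a < (√105 - 5)/10. Then for every integer n ≥ 2 the inequality (-3 + 30a² - 35a⁴ + 8a^{2n+2})·n² + (3 - 35a⁴ + 32a^{2n+2})·n + 30a^{2n+2} - 30a² ≥ 0 holds. -/
/-!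
Write `b = a²` and `c = a^(2n+2) ≥ 0`. The hypotheses on `a` put `b` in `(1/5, 2/7)`, where the
coefficients `-3 + 30b - 35b²` of `n²` and `3 - 35b²` of `n` are nonnegative, so at `n ≥ 2` the
expression is at least its value `-6 + 90b - 210b²` at `n = 2` and `c = 0`, which is again
nonnegative on that interval.
-/

lemma quadratic_nonneg_of_two_le {b c x : ℝ} (hb₁ : 1 / 5 ≤ b) (hb₂ : b ≤ 2 / 7) (hc : 0 ≤ c)
    (hx : 2 ≤ x) :
    0 ≤ (-3 + 30 * b - 35 * b ^ 2 + 8 * c) * x ^ 2 + (3 - 35 * b ^ 2 + 32 * c) * x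
      + 30 * c - 30 * b := by
  have hx₂ : 4 ≤ x ^ 2 := by nlinarith
  have h_quad : 0 ≤ -3 + 30 * b - 35 * b ^ 2 := by nlinarith
  have h_lin : 0 ≤ 3 - 35 * b ^ 2 := by nlinarith
  calc 0 ≤ -6 + 90 * b - 210 * b ^ 2 := by nlinarith
    _ = (-3 + 30 * b - 35 * b ^ 2) * 4 + (3 - 35 * b ^ 2) * 2 - 30 * b := by ring
    _ ≤ (-3 + 30 * b - 35 * b ^ 2) * x ^ 2 + (3 - 35 * b ^ 2) * x - 30 * b := by gcongr
    _ ≤ (-3 + 30 * b - 35 * b ^ 2) * x ^ 2 + (3 - 35 * b ^ 2) * x - 30 * b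
          + c * (8 * x ^ 2 + 32 * x + 30) := le_add_of_nonneg_right (by positivity)
    _ = _ := by ring

lemma one_fifth_lt_sq_of_inv_sqrt_five_lt {a : ℝ} (ha : 1 / Real.sqrt 5 < a) : 1 / 5 < a ^ 2 := by
  have h := pow_lt_pow_left₀ ha (by positivity) two_ne_zero
  rwa [div_pow, one_pow, Real.sq_sqrt (by norm_num)] at h

lemma sq_lt_two_sevenths_of_lt {a : ℝ} (ha₀ : 0 ≤ a) (ha : a < (Real.sqrt 105 - 5) / 10) :
    a ^ 2 < 2 / 7 := by
  have h105 : Real.sqrt 105 ^ 2 = 105 := Real.sq_sqrt (by norm_num)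
  have h_lower : 71 / 7 < Real.sqrt 105 := by
    rw [Real.lt_sqrt (by norm_num)]
    norm_num
  calc a ^ 2 < ((Real.sqrt 105 - 5) / 10) ^ 2 := pow_lt_pow_left₀ ha ha₀ two_ne_zero
    _ = (13 - Real.sqrt 105) / 10 := by linear_combination h105 / 100
    _ < 2 / 7 := by linarith

theorem stmt_4 (a : ℝ) (ha1 : 1 / Real.sqrt 5 < a) (ha2 : a < (Real.sqrt 105 - 5) / 10) :
    ∀ n : ℕ, 2 ≤ n →
      (-3 + 30*a^2 - 35*a^4 + 8*a^(2*n+2)) * (n:ℝ)^2 + (3 - 35*a^4 + 32*a^(2*n+2)) * n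
        + 30*a^(2*n+2) - 30*a^2 ≥ 0 := by
  intro n hn
  have ha₀ : 0 ≤ a := le_of_lt (lt_trans (by positivity) ha1)
  have h := quadratic_nonneg_of_two_le (one_fifth_lt_sq_of_inv_sqrt_five_lt ha1).le
    (sq_lt_two_sevenths_of_lt ha₀ ha2).le
    (by positivity : 0 ≤ a ^ (2 * n + 2)) (by exact_mod_cast hn : (2 : ℝ) ≤ n)
  rwa [← pow_mul] at h
end

section
/- For all natural numbers m and k and all α ∈ [0, 2), the quantity 2·(a_m/(2m+2k+1) + b_m/(2m+2k+3) - 1/(2m+2k+α+1)) is nonnegative, where a_m = ((4m+1)(4m+3))/((4m+1+α)(4m+3+α)) · (2-α)/2 and b_m = ((4m+3)(4m+5))/((4m+1+α)(4m+3+α)) · α/2. Equivalently, after clearing positive denominators, this quantity equals 2α(2-α)·((2k-2m-1)² - 1)/((4m+1+α)(4m+3+α)(2m+2k+1)(2m+2k+3)(2m+2k+α+1)) ≥ 0. -/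
/-!
Over the common denominator, the difference of the two sides collapses to the numerator
`2α(2-α)((2k-2m-1)² - 1)`: both factors are nonnegative for `α ∈ [0,2]`, and the second because
`2k-2m-1` is an odd integer.
-/

lemma one_le_sq_two_mul_sub_one (j : ℤ) : (1 : ℝ) ≤ (2 * j - 1) ^ 2 := by
  have hj : (1 : ℤ) ≤ (2 * j - 1) ^ 2 := by
    rcases le_or_gt j 0 with h | h <;> nlinarith
  exact_mod_cast hj

-- The last three hypotheses are in the shape `field_simp` normalizes those denominators to.
lemma moment_difference_eq (m k α : ℝ) (h₁ : 4*m+1+α ≠ 0) (h₂ : 4*m+3+α ≠ 0)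
    (h₃ : 2*(m+k)+1 ≠ 0) (h₄ : 2*(m+k)+3 ≠ 0) (h₅ : 2*(m+k)+α+1 ≠ 0) :
    2 * (((4*m+1)*(4*m+3)) / ((4*m+1+α)*(4*m+3+α)) * ((2-α)/2) / (2*m+2*k+1)
          + ((4*m+3)*(4*m+5)) / ((4*m+1+α)*(4*m+3+α)) * (α/2) / (2*m+2*k+3)
          - 1 / (2*m+2*k+α+1))
      = 2*α*(2-α) * ((2*k-2*m-1)^2 - 1)
        / ((4*m+1+α)*(4*m+3+α)*(2*m+2*k+1)*(2*m+2*k+3)*(2*m+2*k+α+1)) := by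
  field_simp
  ring

theorem stmt_5 (m k : ℕ) (α : ℝ) (hα0 : 0 ≤ α) (hα2 : α < 2) :
    0 ≤ 2 * (((4*(m:ℝ)+1)*(4*m+3)) / ((4*m+1+α)*(4*m+3+α)) * ((2-α)/2) / (2*m+2*k+1)
          + ((4*(m:ℝ)+3)*(4*m+5)) / ((4*m+1+α)*(4*m+3+α)) * (α/2) / (2*m+2*k+3)
          - 1 / (2*m+2*k+α+1)) ∧
    2 * (((4*(m:ℝ)+1)*(4*m+3)) / ((4*m+1+α)*(4*m+3+α)) * ((2-α)/2) / (2*m+2*k+1)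
          + ((4*(m:ℝ)+3)*(4*m+5)) / ((4*m+1+α)*(4*m+3+α)) * (α/2) / (2*m+2*k+3)
          - 1 / (2*m+2*k+α+1))
      = 2*α*(2-α) * ((2*(k:ℝ)-2*m-1)^2 - 1)
        / ((4*m+1+α)*(4*m+3+α)*(2*m+2*k+1)*(2*m+2*k+3)*(2*m+2*k+α+1)) := by
  have hid := moment_difference_eq m k α (by positivity) (by positivity) (by positivity)
    (by positivity) (by positivity)
  refine ⟨hid ▸ div_nonneg (mul_nonneg ?_ ?_) (by positivity), hid⟩
  · exact mul_nonneg (by positivity) (by linarith)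
  · have hodd := one_le_sq_two_mul_sub_one ((k : ℤ) - m)
    push_cast at hodd
    linarith
end

section
/- Let m ∈ ℕ and α ∈ [0,2). In L²([-1,1]) with Lebesgue measure, the L² distance between the function t ↦ |t|^{2m+α} and the polynomial a_m t^{2m} + b_m t^{2m+2}, where a_m = ((4m+1)(4m+3))/((4m+1+α)(4m+3+α))·(2-α)/2 and b_m = ((4m+3)(4m+5))/((4m+1+α)(4m+3+α))·α/2, equals √2·α(2-α) / ((4m+α+1)(4m+α+3)√(4m+2α+1)). -/
/-!
Every function involved is a power of `|t|`, and `∫_{-1}^{1} |t|^p = 2/(p+1)`. Expanding the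
square therefore turns the squared distance into an explicit rational function of `m` and `α`,
which factorises as the square of the claimed value.
-/

open Real intervalIntegral

theorem integral_abs_rpow {p : ℝ} (hp : 0 ≤ p) : ∫ t in (-1 : ℝ)..1, |t| ^ p = 2 / (p + 1) := by
  have hint : ∀ a b : ℝ, IntervalIntegrable (fun t : ℝ => |t| ^ p) MeasureTheory.volume a b :=
    (by fun_prop (disch := exact hp) : Continuous fun t : ℝ => |t| ^ p).intervalIntegrable
  have hneg : ∫ t in (-1 : ℝ)..0, |t| ^ p = ∫ t in (0 : ℝ)..1, |t| ^ p := by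
    simpa [abs_neg] using (integral_comp_neg (a := 0) (b := 1) fun t : ℝ => |t| ^ p).symm
  have hpos : ∫ t in (0 : ℝ)..1, |t| ^ p = 1 / (p + 1) := by
    rw [integral_congr fun t ht => by rw [abs_of_nonneg (by simpa using ht.1)],
      integral_rpow (Or.inl (by linarith)), one_rpow, zero_rpow (by linarith)]
    ring
  rw [← integral_add_adjacent_intervals (hint _ 0) (hint 0 _), hneg, hpos]
  ring

theorem pow_two_mul_eq_abs_rpow (t : ℝ) (k : ℕ) : t ^ (2 * k) = |t| ^ (2 * (k : ℝ)) := by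
  rw [← (even_two_mul k).pow_abs, ← rpow_natCast]
  push_cast
  rfl

theorem integral_sq_abs_rpow_sub_add {a b c : ℝ} (ha : 0 ≤ a) (hb : 0 ≤ b) (hc : 0 ≤ c) (A B : ℝ) :
    ∫ t in (-1 : ℝ)..1, (|t| ^ a - (A * |t| ^ b + B * |t| ^ c)) ^ 2
      = 2 / (2 * a + 1) - 4 * A / (a + b + 1) - 4 * B / (a + c + 1)
        + 2 * A ^ 2 / (2 * b + 1) + 4 * A * B / (b + c + 1) + 2 * B ^ 2 / (2 * c + 1) := by
  have hmul : ∀ {x y : ℝ}, 0 ≤ x → 0 ≤ y → ∀ t : ℝ, |t| ^ x * |t| ^ y = |t| ^ (x + y) :=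
    fun hx hy t => (rpow_add_of_nonneg (abs_nonneg t) hx hy).symm
  have hexp : ∀ t : ℝ, (|t| ^ a - (A * |t| ^ b + B * |t| ^ c)) ^ 2
      = |t| ^ (a + a) - 2 * A * |t| ^ (a + b) - 2 * B * |t| ^ (a + c)
        + A ^ 2 * |t| ^ (b + b) + 2 * A * B * |t| ^ (b + c) + B ^ 2 * |t| ^ (c + c) := by
    intro t
    rw [← hmul ha ha, ← hmul ha hb, ← hmul ha hc, ← hmul hb hb, ← hmul hb hc, ← hmul hc hc]
    ring
  simp_rw [hexp]
  simp (disch := exact (Continuous.intervalIntegrable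
      (by fun_prop (disch := exact add_nonneg ‹_› ‹_›)) _ _)) only
    [integral_add, integral_sub, integral_const_mul]
  rw [integral_abs_rpow (add_nonneg ha ha), integral_abs_rpow (add_nonneg ha hb),
    integral_abs_rpow (add_nonneg ha hc), integral_abs_rpow (add_nonneg hb hb),
    integral_abs_rpow (add_nonneg hb hc), integral_abs_rpow (add_nonneg hc hc)]
  ring

theorem stmt_6 (m : ℕ) (α : ℝ) (hα0 : 0 ≤ α) (hα2 : α < 2) :
    Real.sqrt (∫ t in (-1:ℝ)..1,
        (|t| ^ (2*(m:ℝ) + α)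
          - (((4*(m:ℝ)+1)*(4*m+3)) / ((4*m+1+α)*(4*m+3+α)) * ((2-α)/2) * t ^ (2*m)
             + ((4*(m:ℝ)+3)*(4*m+5)) / ((4*m+1+α)*(4*m+3+α)) * (α/2) * t ^ (2*m+2)))^2)
      = Real.sqrt 2 * α * (2 - α)
        / ((4*m+α+1) * (4*m+α+3) * Real.sqrt (4*m+2*α+1)) := by
  have heven : ∀ t : ℝ, t ^ (2 * m + 2) = |t| ^ (2 * (m : ℝ) + 2) := fun t => by
    rw [← mul_add_one, pow_two_mul_eq_abs_rpow]
    push_cast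
    ring_nf
  simp_rw [pow_two_mul_eq_abs_rpow, heven]
  rw [integral_sq_abs_rpow_sub_add (by positivity) (by positivity) (by positivity)]
  have hS : (0 : ℝ) ≤ 4 * m + 2 * α + 1 := by positivity
  have hsq : Real.sqrt 2 ^ 2 = 2 := sq_sqrt zero_le_two
  have hrhs : 0 ≤ Real.sqrt 2 * α * (2 - α)
      / ((4*m+α+1) * (4*m+α+3) * Real.sqrt (4*m+2*α+1)) := by
    have : 0 ≤ 2 - α := by linarith
    positivity
  rw [← sqrt_sq hrhs]
  simp only [div_pow, mul_pow, sq_sqrt hS, hsq]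
  congr 1
  field_simp
  ring
end

section
/- Let m ∈ ℕ and α ∈ [0,2). For all natural numbers k ≥ 0, the inequality c_m/(2m+2k+3) + d_m/(2m+2k+5) ≥ 1/(2m+2k+α+3) holds, where c_m = ((4m+3)(4m+5))/((4m+3+α)(4m+5+α))·(2-α)/2 and d_m = ((4m+5)(4m+7))/((4m+3+α)(4m+5+α))·α/2. -/
/-! Clearing denominators, the difference of the two sides is
`4 α (2 - α) (m - k)(m - k + 1)` over a positive denominator, and the product of the two
consecutive integers `m - k` and `m - k + 1` is nonnegative. -/

theorem Int.mul_add_one_nonneg (n : ℤ) : 0 ≤ n * (n + 1) := by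
  rcases le_or_gt 0 n with hn | hn
  · positivity
  · exact mul_nonneg_of_nonpos_of_nonpos hn.le (by omega)

theorem moment_bound_sub_eq (m k : ℕ) (α : ℝ) (hα : 0 ≤ α) :
    ((4*(m:ℝ)+3)*(4*m+5)) / ((4*m+3+α)*(4*m+5+α)) * ((2-α)/2) / (2*m+2*k+3)
      + ((4*(m:ℝ)+5)*(4*m+7)) / ((4*m+3+α)*(4*m+5+α)) * (α/2) / (2*m+2*k+5)
      - 1 / (2*m+2*k+α+3)
      = 4 * α * (2-α) * (((m:ℝ)-k) * ((m:ℝ)-k+1))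
        / ((4*m+3+α) * (4*m+5+α) * (2*m+2*k+3) * (2*m+2*k+5) * (2*m+2*k+α+3)) := by
  field_simp
  ring

theorem stmt_8 (m k : ℕ) (α : ℝ) (hα0 : 0 ≤ α) (hα2 : α < 2) :
    ((4*(m:ℝ)+3)*(4*m+5)) / ((4*m+3+α)*(4*m+5+α)) * ((2-α)/2) / (2*m+2*k+3)
      + ((4*(m:ℝ)+5)*(4*m+7)) / ((4*m+3+α)*(4*m+5+α)) * (α/2) / (2*m+2*k+5)
      ≥ 1 / (2*m+2*k+α+3) := by
  have hconsec : (0:ℝ) ≤ ((m:ℝ)-k) * ((m:ℝ)-k+1) := by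
    exact_mod_cast Int.mul_add_one_nonneg ((m:ℤ) - k)
  have hα : 0 ≤ 2 - α := by linarith
  rw [ge_iff_le, ← sub_nonneg, moment_bound_sub_eq m k α hα0]
  positivity
end

section
/- Let m ∈ ℕ and α ∈ [0,2). The L²([-1,1]) distance between the signed power function f(t) = sgn(t)·|t|^{2m+1+α} and the polynomial c_m t^{2m+1} + d_m t^{2m+3}, where c_m = ((4m+3)(4m+5))/((4m+3+α)(4m+5+α))·(2-α)/2 and d_m = ((4m+5)(4m+7))/((4m+3+α)(4m+5+α))·α/2, equals √2·α(2-α) / ((4m+α+3)(4m+α+5)√(4m+2α+3)). -/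
/-!
The polynomial is odd, so the squared error is an even function of `t` depending only on `|t|`,
and the integral is twice `∫₀¹ (u ^ a - c u ^ (2m+1) - d u ^ (2m+3))²`. Expanding the square
against the Gram matrix `∫₀¹ u ^ p u ^ q = 1 / (p + q + 1)` of the monomials gives a rational
function of `m` and `α`, which simplifies to the square of the claimed distance.
-/

open intervalIntegral Finset

lemma integral_zero_one_rpow_mul_rpow {p q : ℝ} (hp : 0 ≤ p) (hq : 0 ≤ q) :
    ∫ u in (0:ℝ)..1, u ^ p * u ^ q = 1 / (p + q + 1) := by
  have hpq : ∀ u ∈ Set.uIcc (0:ℝ) 1, u ^ p * u ^ q = u ^ (p + q) := fun u hu => by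
    rw [Set.uIcc_of_le zero_le_one] at hu
    exact (Real.rpow_add_of_nonneg hu.1 hp hq).symm
  rw [integral_congr hpq, integral_rpow (Or.inl (by linarith)),
    Real.one_rpow, Real.zero_rpow (by linarith)]
  ring

lemma integral_zero_one_sq_sum_rpow {ι : Type*} (s : Finset ι) (a p : ι → ℝ)
    (hp : ∀ i ∈ s, 0 ≤ p i) :
    ∫ u in (0:ℝ)..1, (∑ i ∈ s, a i * u ^ p i) ^ 2
      = ∑ i ∈ s, ∑ j ∈ s, a i * a j / (p i + p j + 1) := by
  have hcont : ∀ i ∈ s, Continuous fun u : ℝ => u ^ p i := fun i hi =>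
    continuous_id.rpow_const fun _ => Or.inr (hp i hi)
  simp_rw [sq, sum_mul_sum]
  rw [integral_finsetSum fun i hi => ?_]
  · refine sum_congr rfl fun i hi => ?_
    rw [integral_finsetSum fun j hj => ?_]
    · refine sum_congr rfl fun j hj => ?_
      rw [show (fun u : ℝ => a i * u ^ p i * (a j * u ^ p j))
          = fun u => (a i * a j) * (u ^ p i * u ^ p j) by ext; ring,
        integral_const_mul, integral_zero_one_rpow_mul_rpow (hp i hi) (hp j hj), mul_one_div]
    · exact ((continuous_const.mul (hcont i hi)).mul
        (continuous_const.mul (hcont j hj))).intervalIntegrable _ _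
  · exact (continuous_finsetSum _ fun j hj => (continuous_const.mul (hcont i hi)).mul
      (continuous_const.mul (hcont j hj))).intervalIntegrable _ _

lemma integral_neg_self_comp_abs {f : ℝ → ℝ} (hf : Continuous f) {c : ℝ} (hc : 0 ≤ c) :
    ∫ t in -c..c, f |t| = 2 * ∫ t in (0:ℝ)..c, f t := by
  have hfa : Continuous fun t => f |t| := hf.comp continuous_abs
  have hright : ∫ t in (0:ℝ)..c, f |t| = ∫ t in (0:ℝ)..c, f t :=
    integral_congr fun t ht => by
      rw [Set.uIcc_of_le hc] at ht
      rw [abs_of_nonneg ht.1]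
  have hleft : ∫ t in -c..0, f |t| = ∫ t in (0:ℝ)..c, f |t| := by
    simpa using (integral_comp_neg (a := 0) (b := c) fun t => f |t|).symm
  rw [← integral_add_adjacent_intervals (hfa.intervalIntegrable _ 0)
    (hfa.intervalIntegrable 0 _), hleft, hright, two_mul]

lemma sq_sign_mul_sub_of_odd {g h : ℝ → ℝ} (hg : g 0 = 0) (hh : ∀ t, h (-t) = -h t) (t : ℝ) :
    (Real.sign t * g |t| - h t) ^ 2 = (g |t| - h |t|) ^ 2 := by
  rcases lt_trichotomy t 0 with ht | rfl | ht
  · rw [Real.sign_of_neg ht, abs_of_neg ht, hh]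
    ring
  · have h0 : h 0 = 0 := by linarith [neg_zero (G := ℝ) ▸ hh 0]
    simp [hg, h0]
  · rw [Real.sign_of_pos ht, abs_of_pos ht, one_mul]

lemma integral_sq_sign_mul_rpow_sub_odd_pow {a : ℝ} (ha : 0 < a) {j k : ℕ} (hj : Odd j)
    (hk : Odd k) (c d : ℝ) :
    ∫ t in (-1:ℝ)..1, (Real.sign t * |t| ^ a - (c * t ^ j + d * t ^ k)) ^ 2
      = 2 * (1 / (2 * a + 1) - 2 * c / (a + j + 1) - 2 * d / (a + k + 1)
          + c ^ 2 / (2 * j + 1) + 2 * c * d / (j + k + 1) + d ^ 2 / (2 * k + 1)) := by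
  have hodd : ∀ t : ℝ, c * (-t) ^ j + d * (-t) ^ k = -(c * t ^ j + d * t ^ k) := fun t => by
    rw [hj.neg_pow, hk.neg_pow]; ring
  simp_rw [sq_sign_mul_sub_of_odd (g := fun u => u ^ a) (h := fun t => c * t ^ j + d * t ^ k)
    (Real.zero_rpow ha.ne') hodd]
  rw [integral_neg_self_comp_abs (f := fun u => (u ^ a - (c * u ^ j + d * u ^ k)) ^ 2)
    (by fun_prop (disch := positivity)) zero_le_one]
  have hsum : ∀ u : ℝ, (u ^ a - (c * u ^ j + d * u ^ k)) ^ 2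
      = (∑ i : Fin 3, ![1, -c, -d] i * u ^ (![a, (j : ℝ), k] i)) ^ 2 := fun u => by
    simp only [Fin.sum_univ_three, Fin.isValue, Matrix.cons_val_zero, Matrix.cons_val_one,
      Matrix.cons_val, Real.rpow_natCast]
    ring
  simp_rw [hsum]
  rw [integral_zero_one_sq_sum_rpow _ _ _ fun i _ => by fin_cases i <;> simp [ha.le]]
  simp only [Fin.sum_univ_three, Fin.isValue, Matrix.cons_val_zero, Matrix.cons_val_one,
    Matrix.cons_val]
  ring

theorem stmt_9 (m : ℕ) (α : ℝ) (hα0 : 0 ≤ α) (hα2 : α < 2) :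
    Real.sqrt (∫ t in (-1:ℝ)..1,
        (Real.sign t * |t| ^ (2*(m:ℝ) + 1 + α)
          - (((4*(m:ℝ)+3)*(4*m+5)) / ((4*m+3+α)*(4*m+5+α)) * ((2-α)/2) * t ^ (2*m+1)
             + ((4*(m:ℝ)+5)*(4*m+7)) / ((4*m+3+α)*(4*m+5+α)) * (α/2) * t ^ (2*m+3)))^2)
      = Real.sqrt 2 * α * (2 - α)
        / ((4*m+α+3) * (4*m+α+5) * Real.sqrt (4*m+2*α+3)) := by
  have h2α : 0 ≤ 2 - α := by linarith
  rw [integral_sq_sign_mul_rpow_sub_odd_pow (by positivity) (odd_two_mul_add_one m)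
    ⟨m + 1, by ring⟩]
  refine Real.sqrt_eq_cases.mpr (Or.inl ⟨?_, by positivity⟩)
  rw [div_mul_div_comm, ← sq, ← sq]
  simp only [mul_pow, Real.sq_sqrt zero_le_two, Real.sq_sqrt (by positivity : (0:ℝ) ≤ 4*m+2*α+3)]
  push_cast
  field_simp
  ring
end

section
/- Let A = (a_{ij}) be an n×n real symmetric positive definite matrix. Then for any c = (c₁,…,cₙ) ∈ ℝⁿ there exists a unique subset S ⊆ {1,…,n} and a unique vector x ∈ ℝ^S such that: x_i > 0 for all i ∈ S; Σ_{j∈S} a_{ij} x_j = c_i for all i ∈ S; and Σ_{j∈S} a_{ij} x_j ≥ c_i for all i ∈ {1,…,n}. -/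
/-!
A vector `x ≥ 0` solves the complementarity problem `x ≥ 0`, `Ax ≥ c`, `xᵢ (Ax - c)ᵢ = 0` exactly
when it satisfies the variational inequality `(w - x) ⬝ (Ax - c) ≥ 0` for all `w ≥ 0`. For positive
definite `A` this says that `x` is the projection of `A⁻¹c` onto the nonnegative orthant for the
inner product `⟪u, v⟫ = uᵀAv`, which exists by the Hilbert projection theorem; uniqueness follows
by adding the inequalities for two solutions, which gives `(x - y)ᵀA(x - y) ≤ 0`.
-/

open Matrix

variable {ι : Type*} [Fintype ι]

def IsLCPSolution (A : Matrix ι ι ℝ) (c x : ι → ℝ) : Prop :=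
  0 ≤ x ∧ c ≤ A *ᵥ x ∧ ∀ i, 0 < x i → (A *ᵥ x) i = c i

theorem isLCPSolution_iff_variationalInequality {A : Matrix ι ι ℝ} {c x : ι → ℝ} :
    IsLCPSolution A c x ↔ 0 ≤ x ∧ ∀ w, 0 ≤ w → 0 ≤ (w - x) ⬝ᵥ (A *ᵥ x - c) := by
  classical
  constructor
  · rintro ⟨hx, hc, hcomp⟩
    refine ⟨hx, fun w hw => ?_⟩
    have hxg : x ⬝ᵥ (A *ᵥ x - c) = 0 := Finset.sum_eq_zero fun i _ => by
      rcases (hx i).eq_or_lt with hxi | hxi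
      · simp [← hxi]
      · simp [hcomp i hxi]
    rw [sub_dotProduct, hxg, sub_zero]
    exact dotProduct_nonneg_of_nonneg hw (sub_nonneg.2 hc)
  · rintro ⟨hx, hvi⟩
    have hg : 0 ≤ A *ᵥ x - c := fun i => by
      simpa using hvi (x + Pi.single i 1) (add_nonneg hx (Pi.single_nonneg.2 zero_le_one))
    have hxg : x ⬝ᵥ (A *ᵥ x - c) = 0 :=
      le_antisymm (by simpa using hvi 0 le_rfl) (dotProduct_nonneg_of_nonneg hx hg)
    refine ⟨hx, sub_nonneg.1 hg, fun i hxi => ?_⟩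
    have hterm := (Finset.sum_eq_zero_iff_of_nonneg fun j _ => mul_nonneg (hx j) (hg j)).1 hxg i
      (Finset.mem_univ i)
    simpa [hxi.ne', sub_eq_zero] using hterm

/-- `ι → ℝ` without its sup-norm instances, so that a positive definite matrix can supply the
inner product. -/
def EnergySpace (ι : Type*) := ι → ℝ

theorem Matrix.PosDef.exists_nonneg_variationalInequality {A : Matrix ι ι ℝ} (hA : A.PosDef)
    (c : ι → ℝ) : ∃ x, 0 ≤ x ∧ ∀ w, 0 ≤ w → 0 ≤ (w - x) ⬝ᵥ (A *ᵥ x - c) := by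
  classical
  let : NormedAddCommGroup (EnergySpace ι) := A.toNormedAddCommGroup hA
  let : InnerProductSpace ℝ (EnergySpace ι) := A.toInnerProductSpace hA.posSemidef
  have : FiniteDimensional ℝ (EnergySpace ι) := inferInstanceAs (FiniteDimensional ℝ (ι → ℝ))
  let K : Set (EnergySpace ι) := {x | ∀ i, 0 ≤ x i}
  have hK : IsClosed K := by
    simp only [K, Set.ofPred_forall]
    exact isClosed_iInter fun i => isClosed_le continuous_const
      (LinearMap.continuous_of_finiteDimensional (E := EnergySpace ι)
        (LinearMap.proj (R := ℝ) (φ := fun _ : ι => ℝ) i))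
  have hconv : Convex ℝ K := convex_Ici (0 : ι → ℝ)
  obtain ⟨x, hx, hmin⟩ := exists_norm_eq_iInf_of_complete_convex (K := K) ⟨0, fun _ => le_rfl⟩
    hK.isComplete hconv (show EnergySpace ι from A⁻¹ *ᵥ c)
  -- `y` is `x` seen as a plain vector, so that the dot-product lemmas apply.
  set y : ι → ℝ := x
  refine ⟨y, hx, fun w hw => ?_⟩
  have h := (norm_eq_iInf_iff_real_inner_le_zero hconv hx).1 hmin w hw
  change (A *ᵥ (w - y)) ⬝ᵥ star (A⁻¹ *ᵥ c - y) ≤ 0 at h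
  have hAt : Aᵀ = A := by simpa using hA.isHermitian.eq
  rw [star_trivial, dotProduct_comm, dotProduct_mulVec, ← mulVec_transpose, hAt, mulVec_sub,
    mulVec_mulVec, mul_nonsing_inv _ (isUnit_iff_ne_zero.2 hA.det_pos.ne'), one_mulVec] at h
  rw [← neg_sub c, dotProduct_neg, dotProduct_comm]
  linarith

theorem Matrix.PosDef.eq_of_variationalInequality {A : Matrix ι ι ℝ} (hA : A.PosDef)
    {c x y : ι → ℝ} (hx : 0 ≤ (y - x) ⬝ᵥ (A *ᵥ x - c)) (hy : 0 ≤ (x - y) ⬝ᵥ (A *ᵥ y - c)) :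
    x = y := by
  by_contra hne
  have hpos := hA.dotProduct_mulVec_pos (sub_ne_zero.2 hne)
  simp only [star_trivial, mulVec_sub, dotProduct_sub, sub_dotProduct] at hpos hx hy
  linarith

theorem Matrix.PosDef.existsUnique_isLCPSolution {A : Matrix ι ι ℝ} (hA : A.PosDef)
    (c : ι → ℝ) : ∃! x, IsLCPSolution A c x := by
  simp only [isLCPSolution_iff_variationalInequality]
  obtain ⟨x, hx, hvi⟩ := hA.exists_nonneg_variationalInequality c
  exact ⟨x, ⟨hx, hvi⟩, fun y ⟨hy, hvi'⟩ => hA.eq_of_variationalInequality (hvi' x hx) (hvi y hy)⟩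

theorem iff_eq_setOf_pos_and_isLCPSolution {A : Matrix ι ι ℝ} {c x : ι → ℝ} {S : Set ι} :
    ((∀ i, i ∉ S → x i = 0) ∧ (∀ i ∈ S, 0 < x i) ∧ (∀ i ∈ S, (A *ᵥ x) i = c i) ∧
      ∀ i, c i ≤ (A *ᵥ x) i) ↔ S = {i | 0 < x i} ∧ IsLCPSolution A c x := by
  constructor
  · rintro ⟨hzero, hpos, heq, hge⟩
    have hS : S = {i | 0 < x i} := Set.ext fun i =>
      ⟨hpos i, fun hxi => by_contra fun hi => hxi.ne' (hzero i hi)⟩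
    refine ⟨hS, fun i => ?_, hge, fun i hxi => heq i (hS ▸ hxi)⟩
    by_cases hi : i ∈ S
    exacts [(hpos i hi).le, (hzero i hi).ge]
  · rintro ⟨rfl, hx, hge, heq⟩
    exact ⟨fun i hi => le_antisymm (not_lt.1 hi) (hx i), fun i hi => hi, heq, hge⟩

theorem stmt_13 (n : ℕ) (A : Matrix (Fin n) (Fin n) ℝ) (hA : A.PosDef) (c : Fin n → ℝ) :
    ∃! p : Set (Fin n) × (Fin n → ℝ),
      (∀ i, i ∉ p.1 → p.2 i = 0) ∧
      (∀ i ∈ p.1, 0 < p.2 i) ∧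
      (∀ i ∈ p.1, ∑ j, A i j * p.2 j = c i) ∧
      (∀ i, c i ≤ ∑ j, A i j * p.2 j) := by
  obtain ⟨x, hx, huniq⟩ := hA.existsUnique_isLCPSolution c
  refine ⟨({i | 0 < x i}, x), iff_eq_setOf_pos_and_isLCPSolution.2 ⟨rfl, hx⟩, fun p hp => ?_⟩
  obtain ⟨hS, hp⟩ := iff_eq_setOf_pos_and_isLCPSolution.1 hp
  have hpx : p.2 = x := huniq _ hp
  exact Prod.ext (hpx ▸ hS) hpx
end

section
/- The set C = { f ∈ L²([0,1]) : there exists a sequence (aₙ) of nonnegative reals with Σ_{n=0}^∞ aₙ (-t)ⁿ converging to f in L²([0,1]) } is not closed in L²([0,1]). Specifically, the functions g_k(t) = 1/(1 + ρ_k t)² with ρ_k = 1 - 1/(k+1) belong to C and converge in L² to g_∞(t) = 1/(1+t)², but g_∞ ∉ C. -/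
/-!
For `|ρ| < 1` the series `∑ (n+1) ρⁿ (-t)ⁿ` converges to `1/(1+ρt)²` uniformly on `[0,1]`, hence
in `L²`, and `1/(1+ρt)² → 1/(1+t)²` uniformly as `ρ → 1`.

Conversely, if the partial sums of `∑ aₙ (-t)ⁿ` converge in `L²([0,1])` to `f`, the consecutive
differences `aₙ (-t)ⁿ`, of squared norm `aₙ² / (2n+1)`, tend to `0`. Hence `aₙ` grows at most
linearly, the series converges uniformly on `[0, 1/2]`, and its sum, being another `L²` limit of
the partial sums there, equals `f` almost everywhere on `[0, 1/2]`. For `f = 1/(1+t)²` the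
identity theorem for power series then forces `aₙ = n + 1`, contradicting `aₙ² / (2n+1) → 0`.
-/

open MeasureTheory Filter Set Topology

theorem abs_one_div_sq_sub_one_div_sq_le {A B : ℝ} (hA : 1 ≤ A) (hB : 1 ≤ B) :
    |1 / A ^ 2 - 1 / B ^ 2| ≤ 2 * |B - A| := by
  have key : 1 / A ^ 2 - 1 / B ^ 2 = (B - A) * (1 / (A * B ^ 2) + 1 / (A ^ 2 * B)) := by
    field_simp; ring
  have h1 : 1 / (A * B ^ 2) ≤ 1 :=
    div_le_one_of_le₀ (one_le_mul_of_one_le_of_one_le hA (one_le_pow₀ hB)) (by positivity)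
  have h2 : 1 / (A ^ 2 * B) ≤ 1 :=
    div_le_one_of_le₀ (one_le_mul_of_one_le_of_one_le (one_le_pow₀ hA) hB) (by positivity)
  rw [key, abs_mul, mul_comm]
  gcongr
  rw [abs_of_nonneg (by positivity)]
  linarith

theorem tendstoUniformlyOn_sum_mul_neg_pow {a : ℕ → ℝ} {r : ℝ}
    (ha : Summable fun n => |a n| * r ^ n) :
    TendstoUniformlyOn (fun N t => ∑ n ∈ Finset.range N, a n * (-t) ^ n)
      (fun t => ∑' n, a n * (-t) ^ n) atTop (Icc 0 r) :=
  tendstoUniformlyOn_tsum_nat ha fun n t ht => by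
    rw [norm_mul, norm_pow, norm_neg, Real.norm_eq_abs, Real.norm_of_nonneg ht.1]
    gcongr
    exacts [ht.1, ht.2]

theorem tendsto_integral_sq_sub_of_tendstoUniformlyOn {α ι : Type*} [MeasurableSpace α]
    {μ : Measure α} [IsFiniteMeasure μ] {l : Filter ι} {s : Set α} {F : ι → α → ℝ}
    {f g : α → ℝ} (hF : TendstoUniformlyOn F f l s) (hs : ∀ᵐ x ∂μ, x ∈ s) (hfg : f =ᵐ[μ] g) :
    Tendsto (fun i => ∫ x, (F i x - g x) ^ 2 ∂μ) l (𝓝 0) := by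
  rw [Metric.tendsto_nhds]
  intro δ hδ
  set c := μ.real univ
  set ε := Real.sqrt (δ / (c + 1))
  have hε : ε ^ 2 * c < δ := by
    rw [Real.sq_sqrt (by positivity), div_mul_eq_mul_div, div_lt_iff₀ (by positivity)]
    nlinarith
  filter_upwards [Metric.tendstoUniformlyOn_iff.1 hF ε (by positivity)] with i hi
  rw [dist_zero_right]
  refine lt_of_le_of_lt (norm_integral_le_of_norm_le_const ?_) hε
  filter_upwards [hs, hfg] with x hx hfgx
  rw [Real.norm_eq_abs, abs_sq, ← hfgx, ← sq_abs, ← Real.dist_eq, dist_comm]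
  exact pow_le_pow_left₀ dist_nonneg (hi x hx).le 2

theorem integral_sq_sub_le {α : Type*} [MeasurableSpace α] {μ : Measure α} {u v w : α → ℝ}
    (hu : MemLp u 2 μ) (hv : MemLp v 2 μ) (hw : MemLp w 2 μ) :
    ∫ x, (u x - v x) ^ 2 ∂μ ≤ 2 * ∫ x, (u x - w x) ^ 2 ∂μ + 2 * ∫ x, (v x - w x) ^ 2 ∂μ := by
  have huw : Integrable (fun x => 2 * (u x - w x) ^ 2) μ := (hu.sub hw).integrable_sq.const_mul 2
  have hvw : Integrable (fun x => 2 * (v x - w x) ^ 2) μ := (hv.sub hw).integrable_sq.const_mul 2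
  rw [← integral_const_mul, ← integral_const_mul, ← integral_add huw hvw]
  refine integral_mono_of_nonneg (.of_forall fun x => sq_nonneg _) (huw.add hvw)
    (.of_forall fun x => ?_)
  nlinarith [sq_nonneg (u x + v x - 2 * w x)]

theorem ae_eq_of_tendsto_integral_sq_sub {α ι : Type*} [MeasurableSpace α] {μ : Measure α}
    {l : Filter ι} [l.NeBot] {F : ι → α → ℝ} {f g : α → ℝ} (hF : ∀ i, MemLp (F i) 2 μ)
    (hf : MemLp f 2 μ) (hg : MemLp g 2 μ)
    (hFf : Tendsto (fun i => ∫ x, (F i x - f x) ^ 2 ∂μ) l (𝓝 0))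
    (hFg : Tendsto (fun i => ∫ x, (F i x - g x) ^ 2 ∂μ) l (𝓝 0)) :
    f =ᵐ[μ] g := by
  have hle : ∀ i, ∫ x, (f x - g x) ^ 2 ∂μ ≤
      2 * ∫ x, (F i x - f x) ^ 2 ∂μ + 2 * ∫ x, (F i x - g x) ^ 2 ∂μ := fun i => by
    simpa only [sub_sq_comm (F i _)] using integral_sq_sub_le hf hg (hF i)
  have hzero : ∫ x, (f x - g x) ^ 2 ∂μ = 0 :=
    le_antisymm (ge_of_tendsto (by simpa using (hFf.const_mul 2).add (hFg.const_mul 2))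
      (.of_forall hle)) (integral_nonneg fun x => sq_nonneg _)
  have hsq :=
    (integral_eq_zero_iff_of_nonneg (fun x => sq_nonneg _) (hf.sub hg).integrable_sq).1 hzero
  filter_upwards [hsq] with x hx
  simpa [sub_eq_zero] using hx

theorem ContinuousOn.memLp_of_isCompact {f : ℝ → ℝ} {s : Set ℝ} (hs : IsCompact s)
    (hf : ContinuousOn f s) (p : ENNReal) : MemLp f p (volume.restrict s) := by
  have : IsFiniteMeasure (volume.restrict s) := isFiniteMeasure_restrict.2 hs.measure_lt_top.ne
  obtain ⟨C, hC⟩ := hs.exists_bound_of_continuousOn hf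
  exact .of_bound (hf.aestronglyMeasurable hs.measurableSet) C
    ((ae_restrict_iff' hs.measurableSet).2 (.of_forall hC))

theorem frequently_nhdsGT_of_ae_restrict_Icc {p : ℝ → Prop} {a b : ℝ} (hab : a < b)
    (h : ∀ᵐ t ∂volume.restrict (Icc a b), p t) : ∃ᶠ t in 𝓝[>] a, p t := by
  intro hnot
  obtain ⟨u, hu, hsub⟩ := mem_nhdsGT_iff_exists_Ioo_subset.1 hnot
  set I := Ioo a (min u b)
  have hI : volume.restrict I ≠ 0 := by
    rw [Ne, Measure.restrict_eq_zero, Real.volume_Ioo, ENNReal.ofReal_eq_zero, not_le, sub_pos]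
    exact lt_min hu hab
  have hcontra : ∀ᵐ t ∂volume.restrict I, p t ∧ ¬p t := by
    filter_upwards [ae_restrict_of_ae_restrict_of_subset (Ioo_subset_Icc_self.trans
      (Icc_subset_Icc_right (min_le_right u b))) h, ae_restrict_mem measurableSet_Ioo]
      with t ht htI
    exact ⟨ht, hsub (Ioo_subset_Ioo_right (min_le_left u b) htI)⟩
  have := ae_neBot.2 hI
  obtain ⟨t, ht, hnt⟩ := hcontra.exists
  exact hnt ht

theorem eq_of_frequently_tsum_mul_pow_eq {c d : ℕ → ℝ} {f : ℝ → ℝ}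
    (hc : 0 < (FormalMultilinearSeries.ofScalars ℝ c).radius)
    (hd : HasFPowerSeriesAt f (FormalMultilinearSeries.ofScalars ℝ d) 0)
    (h : ∃ᶠ x in 𝓝[≠] 0, ∑' n, c n * x ^ n = f x) : c = d := by
  set p := FormalMultilinearSeries.ofScalars ℝ c
  have hp : HasFPowerSeriesAt p.sum p 0 := (p.hasFPowerSeriesOnBall hc).hasFPowerSeriesAt
  have hsum : p.sum = fun x => ∑' n, c n * x ^ n :=
    FormalMultilinearSeries.ofScalarsSum_eq_tsum c
  rw [hsum] at hp
  have heq := (hp.analyticAt.frequently_eq_iff_eventually_eq hd.analyticAt).1 h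
  exact FormalMultilinearSeries.ofScalars_series_injective ℝ ℝ
    ((hp.congr heq).eq_formalMultilinearSeries hd)

theorem integral_Icc_sq_mul_neg_pow (c : ℝ) (N : ℕ) :
    ∫ t in Icc (0:ℝ) 1, (c * (-t) ^ N) ^ 2 = c ^ 2 / (2 * N + 1) := by
  have (t : ℝ) : (c * (-t) ^ N) ^ 2 = c ^ 2 * t ^ (2 * N) := by
    rw [mul_pow, ← pow_mul, mul_comm N 2, (even_two_mul N).neg_pow]
  simp_rw [this]
  rw [integral_Icc_eq_integral_Ioc, ← intervalIntegral.integral_of_le zero_le_one]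
  simp [integral_pow, div_eq_mul_inv]

theorem tendsto_integral_sq_sum_succ_mul_pow_sub {ρ : ℝ} (hρ : |ρ| < 1) {f : ℝ → ℝ}
    (hf : ∀ᵐ t ∂volume.restrict (Icc (0:ℝ) 1), f t = 1 / (1 + ρ * t) ^ 2) :
    Tendsto (fun N => ∫ t, ((∑ n ∈ Finset.range N, ((n:ℝ) + 1) * ρ ^ n * (-t) ^ n) - f t) ^ 2
      ∂volume.restrict (Icc (0:ℝ) 1)) atTop (𝓝 0) := by
  have hsum : Summable fun n : ℕ => |((n:ℝ) + 1) * ρ ^ n| * 1 ^ n := by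
    refine (summable_choose_mul_geometric_of_norm_lt_one 1 (r := |ρ|) (by simpa using hρ)).congr
      fun n => ?_
    rw [abs_mul, abs_pow, one_pow, mul_one, abs_of_nonneg (by positivity : (0:ℝ) ≤ n + 1)]
    simp
  refine tendsto_integral_sq_sub_of_tendstoUniformlyOn (tendstoUniformlyOn_sum_mul_neg_pow hsum)
    (ae_restrict_mem measurableSet_Icc) ?_
  filter_upwards [hf, ae_restrict_mem measurableSet_Icc] with t hft ht
  have hρt : ‖-(ρ * t)‖ < 1 := by
    rw [norm_neg, norm_mul, Real.norm_of_nonneg ht.1, Real.norm_eq_abs]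
    nlinarith [abs_nonneg ρ, ht.2]
  have hgeom := tsum_choose_mul_geometric_of_norm_lt_one 1 hρt
  simp only [Nat.choose_one_right, Nat.cast_add, Nat.cast_one, sub_neg_eq_add] at hgeom
  rw [hft, ← hgeom]
  exact tsum_congr fun n => by ring

theorem dist_le_of_ae_eq_one_div_sq {f g : Lp ℝ 2 (volume.restrict (Icc (0:ℝ) 1))} {ρ : ℝ}
    (hρ₀ : 0 ≤ ρ) (hρ₁ : ρ ≤ 1)
    (hf : ∀ᵐ t ∂volume.restrict (Icc (0:ℝ) 1), f t = 1 / (1 + ρ * t) ^ 2)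
    (hg : ∀ᵐ t ∂volume.restrict (Icc (0:ℝ) 1), g t = 1 / (1 + t) ^ 2) :
    dist f g ≤ 2 * (1 - ρ) := by
  have hbound : ∀ᵐ t ∂volume.restrict (Icc (0:ℝ) 1), ‖(f - g : Lp ℝ 2 _) t‖ ≤ 2 * (1 - ρ) := by
    filter_upwards [Lp.coeFn_sub f g, hf, hg, ae_restrict_mem measurableSet_Icc]
      with t hfg hft hgt ht
    rw [hfg, Pi.sub_apply, hft, hgt, Real.norm_eq_abs]
    refine (abs_one_div_sq_sub_one_div_sq_le (by nlinarith [ht.1]) (by linarith [ht.1])).trans ?_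
    rw [abs_of_nonneg (by nlinarith [ht.1])]
    nlinarith [ht.1, ht.2]
  have hvol : measureUnivNNReal (volume.restrict (Icc (0:ℝ) 1)) = 1 := by simp [measureUnivNNReal]
  simpa [dist_eq_norm, hvol] using Lp.norm_le_of_ae_bound (by linarith) hbound

theorem tendsto_sq_div_of_tendsto_integral_sq_sum_sub {a : ℕ → ℝ} {f : ℝ → ℝ}
    (hf : MemLp f 2 (volume.restrict (Icc (0:ℝ) 1)))
    (h : Tendsto (fun N => ∫ t, ((∑ n ∈ Finset.range N, a n * (-t) ^ n) - f t) ^ 2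
      ∂volume.restrict (Icc (0:ℝ) 1)) atTop (𝓝 0)) :
    Tendsto (fun N : ℕ => a N ^ 2 / (2 * N + 1)) atTop (𝓝 0) := by
  have hS (N : ℕ) : MemLp (fun t : ℝ => ∑ n ∈ Finset.range N, a n * (-t) ^ n) 2
      (volume.restrict (Icc (0:ℝ) 1)) :=
    (by fun_prop : Continuous _).continuousOn.memLp_of_isCompact isCompact_Icc 2
  refine squeeze_zero (fun N => by positivity) (fun N => ?_)
    (by simpa using ((h.comp (tendsto_add_atTop_nat 1)).const_mul 2).add (h.const_mul 2))
  rw [← integral_Icc_sq_mul_neg_pow]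
  simpa [Finset.sum_range_succ] using integral_sq_sub_le (hS (N + 1)) (hS N) hf

theorem summable_abs_mul_pow_of_tendsto_sq_div {a : ℕ → ℝ}
    (h : Tendsto (fun N : ℕ => a N ^ 2 / (2 * N + 1)) atTop (𝓝 0)) {r : ℝ} (hr₀ : 0 ≤ r)
    (hr₁ : r < 1) : Summable fun n => |a n| * r ^ n := by
  have hO : a =O[atTop] fun n => (n:ℝ) ^ 1 := by
    refine Asymptotics.IsBigO.of_bound 2 ?_
    filter_upwards [h.eventually (gt_mem_nhds one_pos), eventually_ge_atTop 1] with n hn hn1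
    have hn1' : (1:ℝ) ≤ n := by exact_mod_cast hn1
    rw [div_lt_one (by positivity)] at hn
    rw [Real.norm_eq_abs, pow_one, Real.norm_of_nonneg (by positivity)]
    exact abs_le_of_sq_le_sq (by nlinarith) (by positivity)
  exact summable_of_isBigO_nat
    (summable_pow_mul_geometric_of_norm_lt_one 1 (by rwa [Real.norm_of_nonneg hr₀]))
    (hO.norm_left.mul (Asymptotics.isBigO_refl (fun n => r ^ n) atTop))

theorem not_tendsto_integral_sq_sum_sub_one_div_one_add_sq (a : ℕ → ℝ) {f : ℝ → ℝ}
    (hf : MemLp f 2 (volume.restrict (Icc (0:ℝ) 1)))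
    (hf' : ∀ᵐ t ∂volume.restrict (Icc (0:ℝ) 1), f t = 1 / (1 + t) ^ 2) :
    ¬ Tendsto (fun N => ∫ t, ((∑ n ∈ Finset.range N, a n * (-t) ^ n) - f t) ^ 2
      ∂volume.restrict (Icc (0:ℝ) 1)) atTop (𝓝 0) := by
  intro h
  have hsq := tendsto_sq_div_of_tendsto_integral_sq_sum_sub hf h
  have hsum := summable_abs_mul_pow_of_tendsto_sq_div hsq (r := 1 / 2) (by norm_num) (by norm_num)
  have hU := tendstoUniformlyOn_sum_mul_neg_pow hsum
  have hrestrict : (volume.restrict (Icc (0:ℝ) 1)).restrict (Icc 0 (1 / 2)) =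
      volume.restrict (Icc (0:ℝ) (1 / 2)) := by
    rw [Measure.restrict_restrict measurableSet_Icc, Icc_inter_Icc]
    norm_num
  have hle : volume.restrict (Icc (0:ℝ) (1 / 2)) ≤ volume.restrict (Icc (0:ℝ) 1) :=
    hrestrict ▸ Measure.restrict_le_self
  have hS (N : ℕ) : Continuous fun t : ℝ => ∑ n ∈ Finset.range N, a n * (-t) ^ n := by fun_prop
  have hsf : (fun t => ∑' n, a n * (-t) ^ n) =ᵐ[volume.restrict (Icc (0:ℝ) (1 / 2))] f := by
    refine ae_eq_of_tendsto_integral_sq_sub (l := atTop)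
      (fun N => (hS N).continuousOn.memLp_of_isCompact isCompact_Icc 2)
      ((hU.continuousOn (.of_forall fun N => (hS N).continuousOn)).memLp_of_isCompact
        isCompact_Icc 2)
      (hrestrict ▸ hf.restrict _)
      (tendsto_integral_sq_sub_of_tendstoUniformlyOn hU (ae_restrict_mem measurableSet_Icc) .rfl)
      (squeeze_zero (fun N => integral_nonneg fun t => sq_nonneg _) (fun N => ?_) h)
    exact integral_mono_measure hle (.of_forall fun t => sq_nonneg _)
      ((hS N).continuousOn.memLp_of_isCompact isCompact_Icc 2 |>.sub hf).integrable_sq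
  have hfreq : ∃ᶠ x in 𝓝[≠] 0, ∑' n, a n * x ^ n = 1 / (1 - x) ^ 2 := by
    have hae : ∀ᵐ t ∂volume.restrict (Icc (0:ℝ) (1 / 2)),
        ∑' n, a n * (-t) ^ n = 1 / (1 - -t) ^ 2 := by
      filter_upwards [hsf, ae_mono hle hf'] with t h1 h2
      rw [h1, h2, sub_neg_eq_add]
    exact ((tendsto_neg_nhdsGT (a := (0:ℝ))).frequently
      (frequently_nhdsGT_of_ae_restrict_Icc (by norm_num) hae)).filter_mono
      (by simpa using nhdsLT_le_nhdsNE (0:ℝ))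
  have hradius : 0 < (FormalMultilinearSeries.ofScalars ℝ a).radius := by
    refine lt_of_lt_of_le (by norm_num)
      ((FormalMultilinearSeries.ofScalars ℝ a).le_radius_of_summable_norm (r := 1 / 2) ?_)
    simpa [FormalMultilinearSeries.ofScalars_norm] using hsum
  have ha := eq_of_frequently_tsum_mul_pow_eq hradius
    Real.one_div_one_sub_sq_hasFPowerSeriesOnBall_zero.hasFPowerSeriesAt hfreq
  refine absurd (ge_of_tendsto' hsq fun N => ?_) (by norm_num : ¬ (1 / 2 : ℝ) ≤ 0)
  rw [ha, le_div_iff₀ (by positivity)]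
  nlinarith

theorem stmt_15
    (μ : Measure ℝ) (hμ : μ = volume.restrict (Set.Icc (0:ℝ) 1))
    (C : Set (Lp ℝ 2 μ))
    (hC : C = {f : Lp ℝ 2 μ | ∃ a : ℕ → ℝ, (∀ n, 0 ≤ a n) ∧
      Tendsto (fun N => ∫ t, ((∑ n ∈ Finset.range N, a n * (-t)^n) - f t)^2 ∂μ)
        atTop (nhds 0)})
    (g : ℕ → Lp ℝ 2 μ) (ginf : Lp ℝ 2 μ)
    (hg : ∀ k : ℕ, ∀ᵐ t ∂μ, g k t = 1 / (1 + (1 - 1/((k:ℝ)+1)) * t)^2)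
    (hginf : ∀ᵐ t ∂μ, ginf t = 1 / (1 + t)^2) :
    (∀ k, g k ∈ C) ∧ Tendsto g atTop (nhds ginf) ∧ ginf ∉ C ∧ ¬ IsClosed C := by
  subst hμ
  have hρ (k : ℕ) : 0 ≤ 1 - 1 / ((k:ℝ) + 1) ∧ 1 - 1 / ((k:ℝ) + 1) < 1 := by
    constructor
    · rw [sub_nonneg, div_le_one (by positivity)]
      linarith [k.cast_nonneg (α := ℝ)]
    · linarith [(by positivity : 0 < 1 / ((k:ℝ) + 1))]
  have hmem (k : ℕ) : g k ∈ C := by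
    rw [hC]
    exact ⟨fun n => ((n:ℝ) + 1) * (1 - 1 / ((k:ℝ) + 1)) ^ n,
      fun n => mul_nonneg (by positivity) (pow_nonneg (hρ k).1 n),
      tendsto_integral_sq_sum_succ_mul_pow_sub (abs_lt.2 ⟨by linarith [(hρ k).1], (hρ k).2⟩)
        (hg k)⟩
  have htend : Tendsto g atTop (𝓝 ginf) := by
    refine tendsto_iff_dist_tendsto_zero.2 (squeeze_zero (fun k => dist_nonneg)
      (fun k => dist_le_of_ae_eq_one_div_sq (hρ k).1 (hρ k).2.le (hg k) hginf) ?_)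
    simpa using (tendsto_one_div_add_atTop_nhds_zero_nat (𝕜 := ℝ)).const_mul 2
  have hnot : ginf ∉ C := by
    rw [hC]
    rintro ⟨a, -, ha⟩
    exact not_tendsto_integral_sq_sum_sub_one_div_one_add_sq a (Lp.memLp ginf) hginf ha
  exact ⟨hmem, htend, hnot, fun hcl => hnot (hcl.mem_of_tendsto htend (.of_forall hmem))⟩
end

section
/- Let μ be a positive Radon measure on [0,∞) with finite moments of all orders, let s = sup(supp μ), and suppose μ([0,∞) \ [0,s)) = 0. If f ∈ L²(μ) satisfies f = Σ_{n=0}^∞ aₙ tⁿ in L²(μ) with all aₙ ≥ 0 (i.e., the partial sums converge to f in L²(μ)), then the series Σ_{n=0}^∞ aₙ tⁿ converges pointwise for every t ∈ [0, s), and f(t) = Σ_{n=0}^∞ aₙ tⁿ for μ-almost every t ∈ [0, s). -/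
/-!
With nonnegative coefficients the partial sums `S_N` are nondecreasing on `[0, ∞)`, so for
`0 ≤ t < s` (where `μ (Ioi t) > 0`) Chebyshev gives `S_N(t)² μ(Ioi t) ≤ ∫ S_N² dμ`, and the
right-hand side stays bounded because `S_N → f` in `L²`. Bounded partial sums of a nonnegative
series give summability. For the a.e. identity, `L²` convergence yields a subsequence of `S_N`
converging to `f` a.e., while at every `t ∈ [0, s)` the whole sequence converges to the sum.
-/

open MeasureTheory Filter Set Topology

section L2

variable {α : Type*} [MeasurableSpace α] {μ : Measure α}

theorem MeasureTheory.MemLp.eLpNorm_two_eq_ofReal_sqrt_integral_sq {g : α → ℝ}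
    (hg : MemLp g 2 μ) :
    eLpNorm g 2 μ = ENNReal.ofReal √(∫ x, g x ^ 2 ∂μ) := by
  rw [hg.eLpNorm_eq_integral_rpow_norm two_ne_zero ENNReal.ofNat_ne_top, Real.sqrt_eq_rpow]
  norm_num

theorem exists_seq_tendsto_ae_of_tendsto_integral_sq_sub {F : ℕ → α → ℝ} {f : α → ℝ}
    (hF : ∀ N, MemLp (F N) 2 μ) (hf : MemLp f 2 μ)
    (h : Tendsto (fun N => ∫ x, (F N x - f x) ^ 2 ∂μ) atTop (𝓝 0)) :
    ∃ ns : ℕ → ℕ, StrictMono ns ∧ ∀ᵐ x ∂μ, Tendsto (fun k => F (ns k) x) atTop (𝓝 (f x)) := by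
  refine (tendstoInMeasure_of_tendsto_eLpNorm two_ne_zero (fun N => (hF N).1) hf.1 ?_)
    |>.exists_seq_tendsto_ae
  simp_rw [((hF _).sub hf).eLpNorm_two_eq_ofReal_sqrt_integral_sq]
  simpa [Function.comp_def] using
    ((ENNReal.continuous_ofReal.comp Real.continuous_sqrt).tendsto 0).comp h

theorem bddAbove_range_integral_sq_of_tendsto {F : ℕ → α → ℝ} {f : α → ℝ}
    (hF : ∀ N, MemLp (F N) 2 μ) (hf : MemLp f 2 μ)
    (h : Tendsto (fun N => ∫ x, (F N x - f x) ^ 2 ∂μ) atTop (𝓝 0)) :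
    BddAbove (range fun N => ∫ x, F N x ^ 2 ∂μ) := by
  obtain ⟨B, hB⟩ := h.bddAbove_range
  refine ⟨2 * B + 2 * ∫ x, f x ^ 2 ∂μ, ?_⟩
  rintro _ ⟨N, rfl⟩
  have hsq : ∀ {g : α → ℝ}, MemLp g 2 μ → Integrable (fun x => g x ^ 2) μ :=
    fun hg => (memLp_two_iff_integrable_sq hg.1).1 hg
  have hdiff := hsq (g := fun x => F N x - f x) ((hF N).sub hf)
  calc ∫ x, F N x ^ 2 ∂μ
      ≤ ∫ x, (2 * (F N x - f x) ^ 2 + 2 * f x ^ 2) ∂μ :=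
        integral_mono (hsq (hF N)) ((hdiff.const_mul 2).add ((hsq hf).const_mul 2))
          fun x => by nlinarith [sq_nonneg (F N x - 2 * f x)]
    _ = 2 * ∫ x, (F N x - f x) ^ 2 ∂μ + 2 * ∫ x, f x ^ 2 ∂μ := by
        rw [integral_add (hdiff.const_mul 2) ((hsq hf).const_mul 2), integral_const_mul,
          integral_const_mul]
    _ ≤ 2 * B + 2 * ∫ x, f x ^ 2 ∂μ := by
        gcongr
        exact hB ⟨N, rfl⟩

end L2

theorem measure_Ioi_pos_of_lt_sSup_support {μ : Measure ℝ} {t : ℝ}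
    (ht : (t : EReal) < sSup ((fun x : ℝ => (x : EReal)) ''
      {x : ℝ | ∀ U : Set ℝ, IsOpen U → x ∈ U → 0 < μ U})) :
    0 < μ (Ioi t) := by
  obtain ⟨_, ⟨x, hx, rfl⟩, htx⟩ := lt_sSup_iff.1 ht
  exact hx _ isOpen_Ioi (EReal.coe_lt_coe_iff.1 htx)

theorem sq_mul_measureReal_Ioi_le_integral_sq {μ : Measure ℝ} {h : ℝ → ℝ} {t : ℝ}
    (hmono : MonotoneOn h (Ici t)) (ht : 0 ≤ h t) (hint : Integrable (fun u => h u ^ 2) μ)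
    (hμt : μ (Ioi t) ≠ ⊤) :
    h t ^ 2 * μ.real (Ioi t) ≤ ∫ u, h u ^ 2 ∂μ :=
  calc h t ^ 2 * μ.real (Ioi t)
      ≤ ∫ u in Ioi t, h u ^ 2 ∂μ := by
        refine setIntegral_ge_of_const_le_real measurableSet_Ioi hμt (fun u hu => ?_)
          hint.integrableOn
        exact pow_le_pow_left₀ ht (hmono self_mem_Ici (mem_Ici.2 (le_of_lt hu)) (le_of_lt hu)) 2
    _ ≤ ∫ u, h u ^ 2 ∂μ :=
        setIntegral_le_integral hint (Eventually.of_forall fun u => sq_nonneg _)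

section PowerSeries

variable {a : ℕ → ℝ}

theorem monotoneOn_sum_range_mul_pow (ha : ∀ n, 0 ≤ a n) (N : ℕ) :
    MonotoneOn (fun t : ℝ => ∑ n ∈ Finset.range N, a n * t ^ n) (Ici 0) :=
  fun _ hu _ _ huv => Finset.sum_le_sum fun n _ =>
    mul_le_mul_of_nonneg_left (pow_le_pow_left₀ hu huv n) (ha n)

theorem memLp_two_sum_range_mul_pow {μ : Measure ℝ}
    (hmom : ∀ n : ℕ, Integrable (fun t => t ^ n) μ) (N : ℕ) :
    MemLp (fun t => ∑ n ∈ Finset.range N, a n * t ^ n) 2 μ := by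
  refine memLp_finsetSum _ fun n _ => MemLp.const_mul ?_ (a n)
  refine (memLp_two_iff_integrable_sq (by fun_prop)).2 ?_
  simpa only [← pow_mul] using hmom (n * 2)

theorem summable_mul_pow_of_bddAbove_integral_sq {μ : Measure ℝ} [IsFiniteMeasure μ]
    (ha : ∀ n, 0 ≤ a n) {t : ℝ} (ht : 0 ≤ t) (hμt : 0 < μ (Ioi t))
    (hint : ∀ N, Integrable (fun u => (∑ n ∈ Finset.range N, a n * u ^ n) ^ 2) μ)
    (hbdd : BddAbove (range fun N => ∫ u, (∑ n ∈ Finset.range N, a n * u ^ n) ^ 2 ∂μ)) :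
    Summable fun n => a n * t ^ n := by
  obtain ⟨C, hC⟩ := hbdd
  have hm : 0 < μ.real (Ioi t) := ENNReal.toReal_pos hμt.ne' (measure_ne_top _ _)
  refine summable_of_sum_range_le (fun n => mul_nonneg (ha n) (pow_nonneg ht n))
    (c := √(C / μ.real (Ioi t))) fun N => ?_
  have hS : 0 ≤ ∑ n ∈ Finset.range N, a n * t ^ n :=
    Finset.sum_nonneg fun n _ => mul_nonneg (ha n) (pow_nonneg ht n)
  have hmono := (monotoneOn_sum_range_mul_pow ha N).mono (Ici_subset_Ici.2 ht)
  have key := (sq_mul_measureReal_Ioi_le_integral_sq hmono hS (hint N)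
    (measure_ne_top _ _)).trans (hC ⟨N, rfl⟩)
  exact Real.le_sqrt_of_sq_le ((le_div_iff₀ hm).2 key)

end PowerSeries

theorem stmt_19_general (μ : Measure ℝ)
    (hmom : ∀ n : ℕ, Integrable (fun t => t ^ n) μ)
    (s : EReal)
    (hs : s = sSup ((fun x : ℝ => (x : EReal)) ''
      {x : ℝ | ∀ U : Set ℝ, IsOpen U → x ∈ U → 0 < μ U}))
    (f : ℝ → ℝ) (hf : MemLp f 2 μ)
    (a : ℕ → ℝ) (ha : ∀ n, 0 ≤ a n)
    (hconv : Tendsto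
      (fun N => ∫ t, ((∑ n ∈ Finset.range N, a n * t ^ n) - f t)^2 ∂μ)
      atTop (nhds 0)) :
    (∀ t : ℝ, 0 ≤ t → (t : EReal) < s → Summable (fun n => a n * t ^ n)) ∧
    (∀ᵐ (t : ℝ) ∂μ, 0 ≤ t → (t : EReal) < s → f t = ∑' n, a n * t ^ n) := by
  have : IsFiniteMeasure μ :=
    (integrable_const_iff_isFiniteMeasure one_ne_zero).1 (by simpa using hmom 0)
  have hS := memLp_two_sum_range_mul_pow (a := a) hmom
  have hsum : ∀ t : ℝ, 0 ≤ t → (t : EReal) < s → Summable (fun n => a n * t ^ n) :=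
    fun t ht hts => summable_mul_pow_of_bddAbove_integral_sq ha ht
      (measure_Ioi_pos_of_lt_sSup_support (hs ▸ hts))
      (fun N => (memLp_two_iff_integrable_sq (hS N).1).1 (hS N))
      (bddAbove_range_integral_sq_of_tendsto hS hf hconv)
  refine ⟨hsum, ?_⟩
  obtain ⟨ns, hns, hae⟩ := exists_seq_tendsto_ae_of_tendsto_integral_sq_sub hS hf hconv
  filter_upwards [hae] with t ht ht0 hts
  exact tendsto_nhds_unique ht ((hsum t ht0 hts).hasSum.tendsto_sum_nat.comp hns.tendsto_atTop)

theorem stmt_19 (μ : Measure ℝ)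
    (hsupp0 : μ (Set.Iio (0:ℝ)) = 0)
    (hmom : ∀ n : ℕ, Integrable (fun t => t ^ n) μ)
    (s : EReal)
    (hs : s = sSup ((fun x : ℝ => (x : EReal)) ''
      {x : ℝ | ∀ U : Set ℝ, IsOpen U → x ∈ U → 0 < μ U}))
    (hμs : μ {t : ℝ | 0 ≤ t ∧ ¬ ((t : EReal) < s)} = 0)
    (f : ℝ → ℝ) (hf : MemLp f 2 μ)
    (a : ℕ → ℝ) (ha : ∀ n, 0 ≤ a n)
    (hconv : Tendsto
      (fun N => ∫ t, ((∑ n ∈ Finset.range N, a n * t ^ n) - f t)^2 ∂μ)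
      atTop (nhds 0)) :
    (∀ t : ℝ, 0 ≤ t → (t : EReal) < s → Summable (fun n => a n * t ^ n)) ∧
    (∀ᵐ (t : ℝ) ∂μ, 0 ≤ t → (t : EReal) < s → f t = ∑' n, a n * t ^ n) :=
  stmt_19_general μ hmom s hs f hf a ha hconv
end
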